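/- arXiv:1508.07908 — 7 statements merged into one kernel-verified Lean document; each statement's English description precedes it below -/
import Mathlib

section
/- Let δ > 1 and R > 0 be real numbers, and let f : [R,∞) → ℝ be measurable with ∫_R^∞ f(t)² t^δ dt < ∞. Then for every r ≥ R the integral g(r) := ∫_r^∞ f(t) dt converges absolutely, and ∫_R^∞ g(r)² r^{δ−2} dr ≤ (2/(δ−1))² · ∫_R^∞ f(t)² t^δ dt. (Consequently the operator S f = −g satisfies (Sf)' = f and is bounded from L²_δ([R,∞)) to L²_{δ−2}([R,∞)) with norm at most 2/|δ−1|.) -/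
/-! With `a = (δ - 1) / 2`, Cauchy–Schwarz against the weight `t ^ ((δ + 1) / 2)` gives
`g(r)² r^(δ-2) ≤ (1/a) r^(a-1) ∫_r^∞ f² t^((δ+1)/2) dt`. Integrating over `r ≥ R` and exchanging
the order of integration, the inner integral `∫_R^t (1/a) r^(a-1) dr ≤ t^a / a²` restores the
weight `t^δ`. The same Cauchy–Schwarz bound, with weight `t^δ`, shows that `f` is integrable on
every `[r, ∞)`. Everything is done with lower Lebesgue integrals, so no measurability of `g` is
needed. -/

open MeasureTheory Set

theorem ofReal_integral_le_lintegral_ofReal {α : Type*} [MeasurableSpace α] {μ : Measure α}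
    {g : α → ℝ} (hg : 0 ≤ᵐ[μ] g) :
    ENNReal.ofReal (∫ a, g a ∂μ) ≤ ∫⁻ a, ENNReal.ofReal (g a) ∂μ :=
  (Real.ofReal_le_enorm _).trans <| (enorm_integral_le_lintegral_enorm g).trans_eq <|
    lintegral_congr_ae <| hg.mono fun _ ha => Real.enorm_eq_ofReal ha

theorem lintegral_Ici_ofReal_rpow {a r : ℝ} (ha : a < -1) (hr : 0 < r) :
    ∫⁻ t in Ici r, ENNReal.ofReal (t ^ a) = ENNReal.ofReal (-r ^ (a + 1) / (a + 1)) := by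
  rw [← restrict_Ioi_eq_restrict_Ici, ← integral_Ioi_rpow_of_lt ha hr,
    ofReal_integral_eq_lintegral_ofReal (integrableOn_Ioi_rpow_of_lt ha hr)]
  filter_upwards [ae_restrict_mem measurableSet_Ioi] with t ht
  exact Real.rpow_nonneg (hr.trans ht).le a

theorem lintegral_Ioc_zero_ofReal_rpow_sub_one {a t : ℝ} (ha : 0 < a) (ht : 0 ≤ t) :
    ∫⁻ r in Ioc 0 t, ENNReal.ofReal (r ^ (a - 1)) = ENNReal.ofReal (t ^ a / a) := by
  have hint : IntegrableOn (fun r : ℝ => r ^ (a - 1)) (Ioc 0 t) :=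
    (intervalIntegral.intervalIntegrable_rpow' (by linarith)).1
  have hnonneg : 0 ≤ᵐ[volume.restrict (Ioc 0 t)] fun r : ℝ => r ^ (a - 1) := by
    filter_upwards [ae_restrict_mem measurableSet_Ioc] with r hr
    exact Real.rpow_nonneg hr.1.le _
  rw [← ofReal_integral_eq_lintegral_ofReal hint hnonneg, ← intervalIntegral.integral_of_le ht,
    integral_rpow (Or.inl (by linarith)), sub_add_cancel, Real.zero_rpow ha.ne', sub_zero]

theorem sq_lintegral_Ici_enorm_le {f : ℝ → ℝ} (hf : Measurable f) {β r : ℝ} (hβ : 1 < β)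
    (hr : 0 < r) :
    (∫⁻ t in Ici r, ‖f t‖ₑ) ^ 2 ≤
      (∫⁻ t in Ici r, ENNReal.ofReal (f t ^ 2 * t ^ β)) *
        ENNReal.ofReal (r ^ (1 - β) / (β - 1)) := by
  set F : ℝ → ENNReal := fun t => ENNReal.ofReal (f t ^ 2 * t ^ β)
  set G : ℝ → ENNReal := fun t => ENNReal.ofReal (t ^ (-β))
  have hsplit : ∫⁻ t in Ici r, ‖f t‖ₑ = ∫⁻ t in Ici r, F t ^ (1 / 2 : ℝ) * G t ^ (1 / 2 : ℝ) := by
    refine setLIntegral_congr_fun measurableSet_Ici fun t ht => ?_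
    have ht0 : 0 < t := hr.trans_le ht
    rw [← ENNReal.mul_rpow_of_nonneg _ _ (by norm_num), ← ENNReal.ofReal_mul (by positivity),
      mul_assoc, ← Real.rpow_add ht0, add_neg_cancel, Real.rpow_zero, mul_one,
      Real.enorm_eq_ofReal_abs, ← Real.sqrt_sq_eq_abs, Real.sqrt_eq_rpow,
      ENNReal.ofReal_rpow_of_nonneg (sq_nonneg _) (by norm_num)]
  have hG : ∫⁻ t in Ici r, G t = ENNReal.ofReal (r ^ (1 - β) / (β - 1)) := by
    rw [lintegral_Ici_ofReal_rpow (by linarith) hr]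
    congr 1
    rw [show -β + 1 = 1 - β by ring, neg_div, ← div_neg, neg_sub]
  have hF_meas : Measurable F := by fun_prop
  have hG_meas : Measurable G := by fun_prop
  have hHolder := ENNReal.lintegral_mul_norm_pow_le (μ := volume.restrict (Ici r))
    hF_meas.aemeasurable hG_meas.aemeasurable (p := 1 / 2) (q := 1 / 2) (by norm_num)
    (by norm_num) (by norm_num)
  rw [hsplit, ← hG]
  calc (∫⁻ t in Ici r, F t ^ (1 / 2 : ℝ) * G t ^ (1 / 2 : ℝ)) ^ 2
      ≤ ((∫⁻ t in Ici r, F t) ^ (1 / 2 : ℝ) * (∫⁻ t in Ici r, G t) ^ (1 / 2 : ℝ)) ^ 2 :=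
        pow_le_pow_left₀ zero_le hHolder 2
    _ = (∫⁻ t in Ici r, F t) * ∫⁻ t in Ici r, G t := by
        rw [← ENNReal.mul_rpow_of_nonneg _ _ (by norm_num), ← ENNReal.rpow_natCast,
          ← ENNReal.rpow_mul]
        norm_num

theorem integrableOn_Ici_of_integrableOn_sq_mul_rpow {f : ℝ → ℝ} (hf : Measurable f)
    {β r : ℝ} (hβ : 1 < β) (hr : 0 < r)
    (h : IntegrableOn (fun t => f t ^ 2 * t ^ β) (Ici r)) : IntegrableOn f (Ici r) := by
  refine ⟨hf.aestronglyMeasurable, ?_⟩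
  have hweighted : ∫⁻ t in Ici r, ENNReal.ofReal (f t ^ 2 * t ^ β) < ⊤ :=
    (lintegral_ofReal_le_lintegral_enorm _).trans_lt h.2
  have hsq := (sq_lintegral_Ici_enorm_le hf hβ hr).trans_lt
    (ENNReal.mul_lt_top hweighted ENNReal.ofReal_lt_top)
  exact (ENNReal.pow_lt_top_iff.1 hsq).resolve_right two_ne_zero

theorem ofReal_sq_setIntegral_Ici_mul_rpow_le {f : ℝ → ℝ} (hf : Measurable f) {δ r : ℝ}
    (hδ : 1 < δ) (hr : 0 < r) :
    ENNReal.ofReal ((∫ t in Ici r, f t) ^ 2 * r ^ (δ - 2)) ≤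
      (∫⁻ t in Ici r, ENNReal.ofReal (f t ^ 2 * t ^ ((δ + 1) / 2))) *
        ENNReal.ofReal (2 / (δ - 1) * r ^ ((δ - 1) / 2 - 1)) := by
  have hcs := sq_lintegral_Ici_enorm_le hf (β := (δ + 1) / 2) (by linarith) hr
  have hg : ENNReal.ofReal ((∫ t in Ici r, f t) ^ 2) ≤ (∫⁻ t in Ici r, ‖f t‖ₑ) ^ 2 := by
    calc ENNReal.ofReal ((∫ t in Ici r, f t) ^ 2) ≤ ‖∫ t in Ici r, f t‖ₑ ^ 2 :=
          (Real.ofReal_le_enorm _).trans_eq (enorm_pow _ 2)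
      _ ≤ (∫⁻ t in Ici r, ‖f t‖ₑ) ^ 2 := by gcongr; exact enorm_integral_le_lintegral_enorm f
  calc ENNReal.ofReal ((∫ t in Ici r, f t) ^ 2 * r ^ (δ - 2))
      = ENNReal.ofReal ((∫ t in Ici r, f t) ^ 2) * ENNReal.ofReal (r ^ (δ - 2)) :=
        ENNReal.ofReal_mul (sq_nonneg _)
    _ ≤ (∫⁻ t in Ici r, ENNReal.ofReal (f t ^ 2 * t ^ ((δ + 1) / 2))) *
          ENNReal.ofReal (r ^ (1 - (δ + 1) / 2) / ((δ + 1) / 2 - 1)) *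
          ENNReal.ofReal (r ^ (δ - 2)) := by
        gcongr
        exact hg.trans hcs
    _ = _ := by
        rw [mul_assoc, ← ENNReal.ofReal_mul (div_nonneg (by positivity) (by linarith))]
        congr 2
        rw [div_mul_eq_mul_div, ← Real.rpow_add hr]
        field_simp
        ring_nf

theorem lintegral_Ici_lintegral_Ici_mul {F c : ℝ → ENNReal} (hF : Measurable F)
    (hc : Measurable c) (R : ℝ) :
    ∫⁻ r in Ici R, (∫⁻ t in Ici r, F t) * c r = ∫⁻ t in Ici R, F t * ∫⁻ r in Icc R t, c r := by
  set K : ℝ → ℝ → ENNReal := fun r t => if r ≤ t then F t * c r else 0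
  have hK : Measurable (Function.uncurry K) :=
    Measurable.ite (measurableSet_le measurable_fst measurable_snd)
      ((hF.comp measurable_snd).mul (hc.comp measurable_fst)) measurable_const
  calc ∫⁻ r in Ici R, (∫⁻ t in Ici r, F t) * c r
      = ∫⁻ r in Ici R, ∫⁻ t in Ici R, K r t := by
        refine setLIntegral_congr_fun measurableSet_Ici fun r hr => ?_
        have hK_r : K r = (Ici r).indicator fun t => F t * c r := by
          ext t; simp [K, indicator_apply]
        rw [hK_r, lintegral_indicator measurableSet_Ici,
          Measure.restrict_restrict measurableSet_Ici,
          inter_eq_left.2 (Ici_subset_Ici.2 hr), lintegral_mul_const _ hF]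
    _ = ∫⁻ t in Ici R, ∫⁻ r in Ici R, K r t := lintegral_lintegral_swap hK.aemeasurable
    _ = ∫⁻ t in Ici R, F t * ∫⁻ r in Icc R t, c r := by
        congr 1 with t
        have hK_t : (fun r => K r t) = (Iic t).indicator fun r => F t * c r := by
          ext r; simp [K, indicator_apply]
        rw [hK_t, lintegral_indicator measurableSet_Iic,
          Measure.restrict_restrict measurableSet_Iic,
          Iic_inter_Ici, lintegral_const_mul _ hc]

theorem lintegral_sq_setIntegral_Ici_mul_rpow_le {f : ℝ → ℝ} (hf : Measurable f) {δ R : ℝ}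
    (hδ : 1 < δ) (hR : 0 < R) :
    ∫⁻ r in Ici R, ENNReal.ofReal ((∫ t in Ici r, f t) ^ 2 * r ^ (δ - 2)) ≤
      ENNReal.ofReal ((2 / (δ - 1)) ^ 2) * ∫⁻ t in Ici R, ENNReal.ofReal (f t ^ 2 * t ^ δ) := by
  set a := (δ - 1) / 2 with ha_def
  have ha : 0 < a := by linarith
  have hC : 0 ≤ 2 / (δ - 1) := div_nonneg zero_le_two (by linarith)
  calc ∫⁻ r in Ici R, ENNReal.ofReal ((∫ t in Ici r, f t) ^ 2 * r ^ (δ - 2))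
      ≤ ∫⁻ r in Ici R, (∫⁻ t in Ici r, ENNReal.ofReal (f t ^ 2 * t ^ ((δ + 1) / 2))) *
          ENNReal.ofReal (2 / (δ - 1) * r ^ (a - 1)) :=
        setLIntegral_mono' measurableSet_Ici fun r hr =>
          ofReal_sq_setIntegral_Ici_mul_rpow_le hf hδ (hR.trans_le hr)
    _ = ∫⁻ t in Ici R, ENNReal.ofReal (f t ^ 2 * t ^ ((δ + 1) / 2)) *
          ∫⁻ r in Icc R t, ENNReal.ofReal (2 / (δ - 1) * r ^ (a - 1)) :=
        lintegral_Ici_lintegral_Ici_mul (by fun_prop) (by fun_prop) R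
    _ ≤ ∫⁻ t in Ici R, ENNReal.ofReal ((2 / (δ - 1)) ^ 2) * ENNReal.ofReal (f t ^ 2 * t ^ δ) := by
        refine setLIntegral_mono' measurableSet_Ici fun t ht => ?_
        have ht0 : 0 < t := hR.trans_le ht
        calc ENNReal.ofReal (f t ^ 2 * t ^ ((δ + 1) / 2)) *
              ∫⁻ r in Icc R t, ENNReal.ofReal (2 / (δ - 1) * r ^ (a - 1))
            ≤ ENNReal.ofReal (f t ^ 2 * t ^ ((δ + 1) / 2)) *
              ∫⁻ r in Ioc 0 t, ENNReal.ofReal (2 / (δ - 1) * r ^ (a - 1)) := by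
              gcongr
          _ = ENNReal.ofReal (f t ^ 2 * t ^ ((δ + 1) / 2)) *
              ENNReal.ofReal (2 / (δ - 1) * (t ^ a / a)) := by
              simp_rw [ENNReal.ofReal_mul hC]
              rw [lintegral_const_mul _ (by fun_prop),
                lintegral_Ioc_zero_ofReal_rpow_sub_one ha ht0.le]
          _ = ENNReal.ofReal ((2 / (δ - 1)) ^ 2) * ENNReal.ofReal (f t ^ 2 * t ^ δ) := by
              rw [← ENNReal.ofReal_mul (by positivity), ← ENNReal.ofReal_mul (by positivity)]
              congr 1
              have hsplit : t ^ δ = t ^ ((δ + 1) / 2) * t ^ a := by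
                rw [← Real.rpow_add ht0, ha_def]; ring_nf
              rw [hsplit, ha_def]
              field_simp
    _ = ENNReal.ofReal ((2 / (δ - 1)) ^ 2) * ∫⁻ t in Ici R, ENNReal.ofReal (f t ^ 2 * t ^ δ) :=
        lintegral_const_mul _ (by fun_prop)

theorem stmt_0 (δ R : ℝ) (hδ : 1 < δ) (hR : 0 < R) (f : ℝ → ℝ)
    (hf : Measurable f)
    (hint : IntegrableOn (fun t => f t ^ 2 * t ^ δ) (Ici R)) :
    (∀ r, R ≤ r → IntegrableOn f (Ici r)) ∧
      (∫ r in Ici R, (∫ t in Ici r, f t) ^ 2 * r ^ (δ - 2)) ≤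
        (2 / (δ - 1)) ^ 2 * ∫ t in Ici R, f t ^ 2 * t ^ δ := by
  refine ⟨fun r hr => integrableOn_Ici_of_integrableOn_sq_mul_rpow hf hδ (hR.trans_le hr)
    (hint.mono_set (Ici_subset_Ici.2 hr)), ?_⟩
  have hweight_nonneg : 0 ≤ᵐ[volume.restrict (Ici R)] fun t => f t ^ 2 * t ^ δ := by
    filter_upwards [ae_restrict_mem measurableSet_Ici] with t ht
    have := hR.trans_le ht
    positivity
  have hrhs : 0 ≤ (2 / (δ - 1)) ^ 2 * ∫ t in Ici R, f t ^ 2 * t ^ δ :=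
    mul_nonneg (sq_nonneg _) (integral_nonneg_of_ae hweight_nonneg)
  refine (ENNReal.ofReal_le_ofReal_iff hrhs).1 ?_
  have hlhs_nonneg : 0 ≤ᵐ[volume.restrict (Ici R)]
      fun r => (∫ t in Ici r, f t) ^ 2 * r ^ (δ - 2) := by
    filter_upwards [ae_restrict_mem measurableSet_Ici] with r hr
    have := hR.trans_le hr
    positivity
  calc ENNReal.ofReal (∫ r in Ici R, (∫ t in Ici r, f t) ^ 2 * r ^ (δ - 2))
      ≤ ∫⁻ r in Ici R, ENNReal.ofReal ((∫ t in Ici r, f t) ^ 2 * r ^ (δ - 2)) :=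
        ofReal_integral_le_lintegral_ofReal hlhs_nonneg
    _ ≤ ENNReal.ofReal ((2 / (δ - 1)) ^ 2) * ∫⁻ t in Ici R, ENNReal.ofReal (f t ^ 2 * t ^ δ) :=
        lintegral_sq_setIntegral_Ici_mul_rpow_le hf hδ hR
    _ = ENNReal.ofReal ((2 / (δ - 1)) ^ 2 * ∫ t in Ici R, f t ^ 2 * t ^ δ) := by
        rw [ENNReal.ofReal_mul (sq_nonneg _),
          ofReal_integral_eq_lintegral_ofReal hint hweight_nonneg]
end

section
/- Let δ < 1 and R > 0 be real numbers, and let f : [R,∞) → ℝ be measurable with ∫_R^∞ f(t)² t^δ dt < ∞. Define g(r) := ∫_R^r f(t) dt for r ≥ R. Then ∫_R^∞ g(r)² r^{δ−2} dr ≤ (2/(1−δ))² · ∫_R^∞ f(t)² t^δ dt. (Consequently the operator S f = g satisfies (Sf)' = f and is bounded from L²_δ([R,∞)) to L²_{δ−2}([R,∞)) with norm at most 2/|δ−1|.) -/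
/-!
Hardy's inequality, by Cauchy–Schwarz with a power weight and Tonelli. With `a = (1 + δ) / 2` and
`c = 2 / (1 - δ)`, Cauchy–Schwarz gives
`g(r)² ≤ (∫_R^r f² t^a) · ∫_0^r t^(-a) = c r^(1-a) ∫_R^r f² t^a`.
Multiplying by `r^(δ-2)` and exchanging the order of integration, the inner integral
`∫_t^∞ r^((δ-3)/2) dr = c t^((δ-1)/2)` turns `f(t)² t^a` into `c f(t)² t^δ`. The argument runs in
`ℝ≥0∞`, where no integrability has to be tracked; the real statement follows from `|g| ≤ ∫ |f|`.
-/

open MeasureTheory Set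

open scoped ENNReal

theorem ENNReal.sq_lintegral_le_lintegral_mul_lintegral_inv {α : Type*} [MeasurableSpace α]
    {μ : Measure α} {F w : α → ℝ≥0∞} (hF : AEMeasurable F μ) (hw : AEMeasurable w μ)
    (hw_zero : ∀ᵐ x ∂μ, w x ≠ 0) (hw_top : ∀ᵐ x ∂μ, w x ≠ ∞) :
    (∫⁻ x, F x ∂μ) ^ 2 ≤ (∫⁻ x, F x ^ 2 * w x ∂μ) * ∫⁻ x, (w x)⁻¹ ∂μ := by
  have h_factor : ∀ᵐ x ∂μ, F x = (F x ^ 2 * w x) ^ (1 / 2 : ℝ) * (w x)⁻¹ ^ (1 / 2 : ℝ) := by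
    filter_upwards [hw_zero, hw_top] with x h0 htop
    rw [← ENNReal.mul_rpow_of_nonneg _ _ (by norm_num), mul_assoc,
      ENNReal.mul_inv_cancel h0 htop, mul_one, ← ENNReal.rpow_natCast, ← ENNReal.rpow_mul]
    norm_num
  have sq_rpow_half : ∀ y : ℝ≥0∞, (y ^ (1 / 2 : ℝ)) ^ 2 = y := fun y => by
    rw [← ENNReal.rpow_natCast, ← ENNReal.rpow_mul]; norm_num
  calc (∫⁻ x, F x ∂μ) ^ 2
      = (∫⁻ x, (F x ^ 2 * w x) ^ (1 / 2 : ℝ) * (w x)⁻¹ ^ (1 / 2 : ℝ) ∂μ) ^ 2 := by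
        rw [lintegral_congr_ae h_factor]
    _ ≤ ((∫⁻ x, F x ^ 2 * w x ∂μ) ^ (1 / 2 : ℝ) * (∫⁻ x, (w x)⁻¹ ∂μ) ^ (1 / 2 : ℝ)) ^ 2 := by
        gcongr
        exact lintegral_mul_norm_pow_le ((hF.pow_const 2).mul hw) hw.inv
          (by norm_num) (by norm_num) (by norm_num)
    _ = _ := by rw [mul_pow, sq_rpow_half, sq_rpow_half]

theorem lintegral_Ioc_zero_rpow {a : ℝ} (ha : a < 1) {r : ℝ} (hr : 0 ≤ r) :
    ∫⁻ t in Ioc 0 r, ENNReal.ofReal (t ^ (-a)) = ENNReal.ofReal (r ^ (1 - a) / (1 - a)) := by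
  have h_int : IntegrableOn (fun t : ℝ => t ^ (-a)) (Ioc 0 r) :=
    (intervalIntegrable_iff_integrableOn_Ioc_of_le hr).mp
      (intervalIntegral.intervalIntegrable_rpow' (by linarith))
  rw [← ofReal_integral_eq_lintegral_ofReal h_int, ← intervalIntegral.integral_of_le hr,
    integral_rpow (Or.inl (by linarith)), Real.zero_rpow (by linarith), sub_zero, neg_add_eq_sub]
  filter_upwards [ae_restrict_mem measurableSet_Ioc] with t ht
  exact Real.rpow_nonneg ht.1.le _

theorem lintegral_Ici_rpow_of_lt {b : ℝ} (hb : b < -1) {t : ℝ} (ht : 0 < t) :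
    ∫⁻ r in Ici t, ENNReal.ofReal (r ^ b) = ENNReal.ofReal (-t ^ (b + 1) / (b + 1)) := by
  rw [← setLIntegral_congr Ioi_ae_eq_Ici,
    ← ofReal_integral_eq_lintegral_ofReal (integrableOn_Ioi_rpow_of_lt hb ht),
    integral_Ioi_rpow_of_lt hb ht]
  filter_upwards [ae_restrict_mem measurableSet_Ioi] with r hr
  exact Real.rpow_nonneg (ht.trans hr).le _

theorem setLIntegral_Ioi_mul_setLIntegral_Ioc {μ : Measure ℝ} [SFinite μ] {k H : ℝ → ℝ≥0∞}
    (hk : Measurable k) (hH : Measurable H) (R : ℝ) :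
    ∫⁻ r in Ioi R, k r * ∫⁻ t in Ioc R r, H t ∂μ ∂μ =
      ∫⁻ t in Ioi R, H t * ∫⁻ r in Ici t, k r ∂μ ∂μ := by
  set Φ : ℝ → ℝ → ℝ≥0∞ := fun r t =>
    {p : ℝ × ℝ | p.2 ≤ p.1}.indicator (fun p => k p.1 * H p.2) (r, t)
  have h_meas : Measurable (Function.uncurry Φ) :=
    ((hk.comp measurable_fst).mul (hH.comp measurable_snd)).indicator
      (measurableSet_le measurable_snd measurable_fst)
  have hΦ_Iic : ∀ r, Φ r = (Iic r).indicator fun t => k r * H t := fun r => by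
    ext t; simp [Φ, indicator]
  have hΦ_Ici : ∀ t, (Φ · t) = (Ici t).indicator fun r => H t * k r := fun t => by
    ext r; simp [Φ, indicator, mul_comm]
  calc ∫⁻ r in Ioi R, k r * ∫⁻ t in Ioc R r, H t ∂μ ∂μ
      = ∫⁻ r in Ioi R, ∫⁻ t in Ioi R, Φ r t ∂μ ∂μ := by
        refine lintegral_congr fun r => ?_
        rw [hΦ_Iic, lintegral_indicator measurableSet_Iic,
          Measure.restrict_restrict measurableSet_Iic, Iic_inter_Ioi, lintegral_const_mul _ hH]
    _ = ∫⁻ t in Ioi R, ∫⁻ r in Ioi R, Φ r t ∂μ ∂μ :=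
        lintegral_lintegral_swap h_meas.aemeasurable
    _ = ∫⁻ t in Ioi R, H t * ∫⁻ r in Ici t, k r ∂μ ∂μ := by
        refine setLIntegral_congr_fun measurableSet_Ioi fun t ht => ?_
        rw [hΦ_Ici, lintegral_indicator measurableSet_Ici,
          Measure.restrict_restrict measurableSet_Ici,
          inter_eq_self_of_subset_left (Ici_subset_Ioi.mpr ht), lintegral_const_mul _ hk]

theorem sq_lintegral_Ioc_le {a R r : ℝ} (ha : a < 1) (hR : 0 ≤ R) (hRr : R ≤ r)
    {F : ℝ → ℝ≥0∞} (hF : Measurable F) :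
    (∫⁻ t in Ioc R r, F t) ^ 2 ≤
      (∫⁻ t in Ioc R r, F t ^ 2 * ENNReal.ofReal (t ^ a)) *
        ENNReal.ofReal (r ^ (1 - a) / (1 - a)) := by
  have h_pos : ∀ᵐ t ∂volume.restrict (Ioc R r), 0 < t := by
    filter_upwards [ae_restrict_mem measurableSet_Ioc] with t ht using hR.trans_lt ht.1
  refine (ENNReal.sq_lintegral_le_lintegral_mul_lintegral_inv hF.aemeasurable
    (by fun_prop) ?_ (.of_forall fun _ => ENNReal.ofReal_ne_top)).trans (mul_le_mul_right ?_ _)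
  · filter_upwards [h_pos] with t ht
    exact ENNReal.ofReal_ne_zero_iff.mpr (Real.rpow_pos_of_pos ht a)
  calc ∫⁻ t in Ioc R r, (ENNReal.ofReal (t ^ a))⁻¹
      = ∫⁻ t in Ioc R r, ENNReal.ofReal (t ^ (-a)) := by
        refine lintegral_congr_ae ?_
        filter_upwards [h_pos] with t ht
        rw [Real.rpow_neg ht.le, ENNReal.ofReal_inv_of_pos (Real.rpow_pos_of_pos ht a)]
    _ ≤ ∫⁻ t in Ioc 0 r, ENNReal.ofReal (t ^ (-a)) :=
        lintegral_mono_set (Ioc_subset_Ioc_left hR)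
    _ = _ := lintegral_Ioc_zero_rpow ha (hR.trans hRr)

theorem lintegral_Ioi_sq_lintegral_Ioc_mul_rpow_le {δ R : ℝ} (hδ : δ < 1) (hR : 0 ≤ R)
    {F : ℝ → ℝ≥0∞} (hF : Measurable F) :
    ∫⁻ r in Ioi R, (∫⁻ t in Ioc R r, F t) ^ 2 * ENNReal.ofReal (r ^ (δ - 2)) ≤
      ENNReal.ofReal ((2 / (1 - δ)) ^ 2) * ∫⁻ t in Ioi R, F t ^ 2 * ENNReal.ofReal (t ^ δ) := by
  set c := 2 / (1 - δ) with hc_def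
  have hc : 0 ≤ c := div_nonneg zero_le_two (by linarith)
  set a := (1 + δ) / 2 with ha
  set b := (δ - 3) / 2 with hb
  set H : ℝ → ℝ≥0∞ := fun t => F t ^ 2 * ENNReal.ofReal (t ^ a)
  have h_inner : ∀ r ∈ Ioi R, (∫⁻ t in Ioc R r, F t) ^ 2 * ENNReal.ofReal (r ^ (δ - 2)) ≤
      ENNReal.ofReal c * (ENNReal.ofReal (r ^ b) * ∫⁻ t in Ioc R r, H t) := by
    intro r hr
    have hr0 : 0 < r := hR.trans_lt hr
    have h_exp : r ^ (1 - a) / (1 - a) * r ^ (δ - 2) = c * r ^ b := by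
      rw [div_mul_eq_mul_div, ← Real.rpow_add hr0, ha, hb, hc_def]
      field_simp
      ring_nf
    calc (∫⁻ t in Ioc R r, F t) ^ 2 * ENNReal.ofReal (r ^ (δ - 2))
        ≤ (∫⁻ t in Ioc R r, H t) * ENNReal.ofReal (r ^ (1 - a) / (1 - a)) *
            ENNReal.ofReal (r ^ (δ - 2)) := by
          gcongr; exact sq_lintegral_Ioc_le (by linarith) hR (le_of_lt hr) hF
      _ = _ := by
          rw [mul_assoc, ← ENNReal.ofReal_mul (div_nonneg (by positivity) (by linarith)), h_exp,
            ENNReal.ofReal_mul hc]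
          ring
  have h_tail : ∀ t ∈ Ioi R, H t * ∫⁻ r in Ici t, ENNReal.ofReal (r ^ b) =
      ENNReal.ofReal c * (F t ^ 2 * ENNReal.ofReal (t ^ δ)) := by
    intro t ht
    have ht0 : 0 < t := hR.trans_lt ht
    have h_exp : t ^ a * (-t ^ (b + 1) / (b + 1)) = c * t ^ δ := by
      rw [mul_div_assoc', mul_neg, ← Real.rpow_add ht0, ha, hb, hc_def,
        show (1 + δ) / 2 + ((δ - 3) / 2 + 1) = δ by ring,
        show (δ - 3) / 2 + 1 = -((1 - δ) / 2) by ring]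
      field_simp
    rw [lintegral_Ici_rpow_of_lt (by linarith) ht0, mul_assoc,
      ← ENNReal.ofReal_mul (by positivity), h_exp, ENNReal.ofReal_mul hc]
    ring
  calc ∫⁻ r in Ioi R, (∫⁻ t in Ioc R r, F t) ^ 2 * ENNReal.ofReal (r ^ (δ - 2))
      ≤ ∫⁻ r in Ioi R, ENNReal.ofReal c * (ENNReal.ofReal (r ^ b) * ∫⁻ t in Ioc R r, H t) :=
        setLIntegral_mono' measurableSet_Ioi h_inner
    _ = ENNReal.ofReal c * ∫⁻ t in Ioi R, H t * ∫⁻ r in Ici t, ENNReal.ofReal (r ^ b) := by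
        rw [lintegral_const_mul' _ _ ENNReal.ofReal_ne_top,
          setLIntegral_Ioi_mul_setLIntegral_Ioc (by fun_prop) (by fun_prop)]
    _ = ENNReal.ofReal c *
          (ENNReal.ofReal c * ∫⁻ t in Ioi R, F t ^ 2 * ENNReal.ofReal (t ^ δ)) := by
        rw [setLIntegral_congr_fun measurableSet_Ioi h_tail,
          lintegral_const_mul' _ _ ENNReal.ofReal_ne_top]
    _ = _ := by rw [← mul_assoc, ← ENNReal.ofReal_mul hc, sq]

theorem stmt_1 (δ R : ℝ) (hδ : δ < 1) (hR : 0 < R) (f : ℝ → ℝ)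
    (hf : Measurable f)
    (hint : IntegrableOn (fun t => f t ^ 2 * t ^ δ) (Ici R)) :
    (∫ r in Ici R, (∫ t in R..r, f t) ^ 2 * r ^ (δ - 2)) ≤
      (2 / (1 - δ)) ^ 2 * ∫ t in Ici R, f t ^ 2 * t ^ δ := by
  have h_nonneg : 0 ≤ᵐ[volume.restrict (Ioi R)] fun t => f t ^ 2 * t ^ δ := by
    filter_upwards [ae_restrict_mem measurableSet_Ioi] with t ht
    have := hR.trans ht
    positivity
  have h_enorm : ∀ r ∈ Ioi R, ‖(∫ t in R..r, f t) ^ 2 * r ^ (δ - 2)‖ₑ ≤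
      (∫⁻ t in Ioc R r, ‖f t‖ₑ) ^ 2 * ENNReal.ofReal (r ^ (δ - 2)) := by
    intro r hr
    rw [enorm_mul, enorm_pow, Real.enorm_of_nonneg (Real.rpow_nonneg (hR.trans hr).le _),
      intervalIntegral.integral_of_le (le_of_lt hr)]
    gcongr
    exact enorm_integral_le_lintegral_enorm _
  have h_sq : ∀ t, ‖f t‖ₑ ^ 2 * ENNReal.ofReal (t ^ δ) = ENNReal.ofReal (f t ^ 2 * t ^ δ) := by
    intro t
    rw [ENNReal.ofReal_mul (sq_nonneg _), Real.enorm_eq_ofReal_abs,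
      ← ENNReal.ofReal_pow (abs_nonneg _), sq_abs]
  rw [integral_Ici_eq_integral_Ioi, integral_Ici_eq_integral_Ioi,
    ← ENNReal.ofReal_le_ofReal_iff (mul_nonneg (sq_nonneg _) (integral_nonneg_of_ae h_nonneg)),
    ENNReal.ofReal_mul (by positivity),
    ofReal_integral_eq_lintegral_ofReal (hint.mono_set Ioi_subset_Ici_self) h_nonneg]
  calc ENNReal.ofReal (∫ r in Ioi R, (∫ t in R..r, f t) ^ 2 * r ^ (δ - 2))
      ≤ ∫⁻ r in Ioi R, ‖(∫ t in R..r, f t) ^ 2 * r ^ (δ - 2)‖ₑ :=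
        (Real.ofReal_le_enorm _).trans (enorm_integral_le_lintegral_enorm _)
    _ ≤ ∫⁻ r in Ioi R, (∫⁻ t in Ioc R r, ‖f t‖ₑ) ^ 2 * ENNReal.ofReal (r ^ (δ - 2)) :=
        setLIntegral_mono' measurableSet_Ioi h_enorm
    _ ≤ ENNReal.ofReal ((2 / (1 - δ)) ^ 2) *
          ∫⁻ t in Ioi R, ‖f t‖ₑ ^ 2 * ENNReal.ofReal (t ^ δ) :=
        lintegral_Ioi_sq_lintegral_Ioc_mul_rpow_le hδ hR.le hf.enorm
    _ = _ := by simp_rw [h_sq]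
end

section
/- Let m ∈ ℝ, k ∈ ℕ, and let x₁, …, x_k be points of ℝ³ (EuclideanSpace ℝ (Fin 3)). Define, for x outside a compact set containing 0 and all ±x_α, V(x) = 1 − 16m/‖x‖ + Σ_{α=1}^{k} (4m/‖x − x_α‖ + 4m/‖x + x_α‖). Then the function x ↦ V(x) − 1 − 8m(k−2)/‖x‖ is O(‖x‖^{−3}) as ‖x‖ → ∞ (i.e., along the cocompact filter on ℝ³). -/
/-! The point sources at `±x_α` come in symmetric pairs, so in the expansion of
`1/‖x - q‖ + 1/‖x + q‖` in powers of `1/‖x‖` the dipole terms of order `‖x‖⁻²` cancel.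
Concretely, the parallelogram law `‖x - q‖² + ‖x + q‖² = 2‖x‖² + 2‖q‖²` forces the first-order
deviations of `‖x ∓ q‖` from `‖x‖` to cancel, leaving `O(‖q‖² / ‖x‖³)` for each pair; the
monopole terms then add up to `(8k - 16) m / ‖x‖`. -/

open Filter Asymptotics Bornology

lemma abs_inv_add_inv_sub_two_div_le {a b r c : ℝ} (hr : 0 < r) (hcr : 2 * c ≤ r)
    (ha : |a - r| ≤ c) (hb : |b - r| ≤ c) (hab : a ^ 2 + b ^ 2 = 2 * r ^ 2 + 2 * c ^ 2) :
    |a⁻¹ + b⁻¹ - 2 / r| ≤ 16 * c ^ 2 / r ^ 3 := by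
  obtain ⟨ha₁, ha₂⟩ := abs_le.1 ha
  obtain ⟨hb₁, hb₂⟩ := abs_le.1 hb
  have ha₀ : 0 < a := by linarith
  have hb₀ : 0 < b := by linarith
  have hsum : r * (a - r + (b - r)) = c ^ 2 - ((a - r) ^ 2 + (b - r) ^ 2) / 2 := by
    linear_combination hab / 2
  -- by `hsum`, the numerator is `((a-r)² + (b-r)²)/2 - 2(a-r)(b-r) - c²`, of size `≤ 4c²`
  have hnum : |r * (a + b) - 2 * a * b| ≤ 4 * c ^ 2 := by
    rw [abs_le]
    constructor <;> nlinarith [sq_nonneg (a - r + (b - r)), sq_nonneg (a - r - (b - r))]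
  have hden : r ^ 3 ≤ 4 * (a * b * r) := by
    have hab₀ : (r - c) * (r - c) ≤ a * b :=
      mul_le_mul (by linarith) (by linarith) (by linarith) ha₀.le
    nlinarith
  have hcommon : a⁻¹ + b⁻¹ - 2 / r = (r * (a + b) - 2 * a * b) / (a * b * r) := by
    field_simp
    ring
  calc |a⁻¹ + b⁻¹ - 2 / r| = |r * (a + b) - 2 * a * b| / (a * b * r) := by
        rw [hcommon, abs_div, abs_of_pos (by positivity : 0 < a * b * r)]
    _ ≤ 4 * c ^ 2 / (r ^ 3 / 4) := by
        gcongr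
        linarith
    _ = 16 * c ^ 2 / r ^ 3 := by ring

variable {E : Type*} [NormedAddCommGroup E] [InnerProductSpace ℝ E]

lemma abs_inv_norm_sub_add_inv_norm_add_sub_le {x q : E} (hx : 0 < ‖x‖) (hq : 2 * ‖q‖ ≤ ‖x‖) :
    |‖x - q‖⁻¹ + ‖x + q‖⁻¹ - 2 / ‖x‖| ≤ 16 * ‖q‖ ^ 2 / ‖x‖ ^ 3 := by
  refine abs_inv_add_inv_sub_two_div_le hx hq ?_ ?_ ?_
  · simpa using abs_norm_sub_norm_le (x - q) x
  · simpa using abs_norm_sub_norm_le (x + q) x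
  · linear_combination parallelogram_law_with_norm ℝ x q

lemma isBigO_inv_norm_sub_add_inv_norm_add_sub (q : E) :
    (fun x : E => ‖x - q‖⁻¹ + ‖x + q‖⁻¹ - 2 / ‖x‖) =O[cobounded E] fun x => ‖x‖ ^ (-3 : ℤ) := by
  refine IsBigO.of_bound (16 * ‖q‖ ^ 2) ?_
  filter_upwards [eventually_cobounded_le_norm (2 * ‖q‖ + 1)] with x hx
  have hx₀ : 0 < ‖x‖ := by linarith [norm_nonneg q]
  rw [Real.norm_eq_abs, norm_zpow, norm_norm, zpow_neg, zpow_ofNat, ← div_eq_mul_inv]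
  exact abs_inv_norm_sub_add_inv_norm_add_sub_le hx₀ (by linarith)

theorem stmt_7 (m : ℝ) (k : ℕ) (p : Fin k → EuclideanSpace ℝ (Fin 3)) :
    (fun x : EuclideanSpace ℝ (Fin 3) =>
        (1 - 16 * m / ‖x‖ + ∑ α, (4 * m / ‖x - p α‖ + 4 * m / ‖x + p α‖)) -
          1 - 8 * m * ((k : ℝ) - 2) / ‖x‖)
      =O[cocompact (EuclideanSpace ℝ (Fin 3))]
      (fun x => ‖x‖ ^ (-3 : ℤ)) := by
  have hpairs : (fun x : EuclideanSpace ℝ (Fin 3) =>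
        (1 - 16 * m / ‖x‖ + ∑ α, (4 * m / ‖x - p α‖ + 4 * m / ‖x + p α‖)) -
          1 - 8 * m * ((k : ℝ) - 2) / ‖x‖) =
      fun x => ∑ α, 4 * m * (‖x - p α‖⁻¹ + ‖x + p α‖⁻¹ - 2 / ‖x‖) := by
    funext x
    simp only [mul_sub, mul_add, Finset.sum_sub_distrib, Finset.sum_const,
      Finset.card_univ, Fintype.card_fin, nsmul_eq_mul, div_eq_mul_inv]
    ring
  rw [hpairs, ← Metric.cobounded_eq_cocompact]
  exact IsBigO.fun_sum fun α _ => (isBigO_inv_norm_sub_add_inv_norm_add_sub (p α)).const_mul_left _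
end

section
/- Let a ∈ ℝ³ (EuclideanSpace ℝ (Fin 3)). Then the function x ↦ 1/‖x − a‖ + 1/‖x + a‖ − 2/‖x‖, defined for x outside a compact set containing 0, a and −a, is O(‖x‖^{−3}) as ‖x‖ → ∞ (along the cocompact filter on ℝ³). -/
/-!
Write `r = ‖x‖`, `u = ‖x - a‖`, `v = ‖x + a‖`, `s = ‖a‖`. Then
`1/u + 1/v - 2/r = (r (u + v) - 2 u v) / (r u v)`. With `α = u - r`, `β = v - r`, the parallelogram
law `u² + v² = 2 (r² + s²)` turns the numerator into `-s² + (α² + β²)/2 - 2 α β`: the first-order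
terms `r (α + β)` cancel. Since `|α|, |β| ≤ s` by the triangle inequality, the numerator is at most
`4 s²`, while the denominator is at least `r³/4` once `2 s ≤ r`.
-/

open Filter Asymptotics

theorem abs_mul_add_sub_two_mul_le {r s u v : ℝ} (hu : |u - r| ≤ s) (hv : |v - r| ≤ s)
    (hpar : u ^ 2 + v ^ 2 = 2 * (r ^ 2 + s ^ 2)) :
    |r * (u + v) - 2 * u * v| ≤ 4 * s ^ 2 := by
  have hnum : r * (u + v) - 2 * u * v
      = -s ^ 2 + ((u - r) ^ 2 + (v - r) ^ 2) / 2 - 2 * ((u - r) * (v - r)) := by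
    linear_combination (-1 / 2 : ℝ) * hpar
  have hα : (u - r) ^ 2 ≤ s ^ 2 := sq_le_sq' (abs_le.mp hu).1 (abs_le.mp hu).2
  have hβ : (v - r) ^ 2 ≤ s ^ 2 := sq_le_sq' (abs_le.mp hv).1 (abs_le.mp hv).2
  have hαβ : |(u - r) * (v - r)| ≤ s ^ 2 := by
    rw [abs_mul, sq]
    exact mul_le_mul hu hv (abs_nonneg _) ((abs_nonneg _).trans hu)
  obtain ⟨hαβ₁, hαβ₂⟩ := abs_le.mp hαβ
  rw [hnum, abs_le]
  constructor <;> linarith [sq_nonneg (u - r), sq_nonneg (v - r)]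

theorem abs_one_div_add_one_div_sub_two_div_le {r s u v : ℝ} (hr : 0 < r) (hs : 2 * s ≤ r)
    (hu : |u - r| ≤ s) (hv : |v - r| ≤ s) (hpar : u ^ 2 + v ^ 2 = 2 * (r ^ 2 + s ^ 2)) :
    |1 / u + 1 / v - 2 / r| ≤ 16 * s ^ 2 / r ^ 3 := by
  have hu₀ : r / 2 ≤ u := by linarith [(abs_le.mp hu).1]
  have hv₀ : r / 2 ≤ v := by linarith [(abs_le.mp hv).1]
  have hu_pos : 0 < u := by linarith
  have hv_pos : 0 < v := by linarith
  have hD : r ^ 3 / 4 ≤ r * u * v :=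
    calc r ^ 3 / 4 = r * (r / 2) * (r / 2) := by ring
      _ ≤ r * u * v := by gcongr
  calc |1 / u + 1 / v - 2 / r| = |r * (u + v) - 2 * u * v| / (r * u * v) := by
        rw [← abs_of_pos (by positivity : 0 < r * u * v), ← abs_div]
        congr 1
        field_simp
        ring
    _ ≤ 4 * s ^ 2 / (r ^ 3 / 4) :=
        div_le_div₀ (by positivity) (abs_mul_add_sub_two_mul_le hu hv hpar) (by positivity) hD
    _ = 16 * s ^ 2 / r ^ 3 := by field_simp; ring

section InnerProductSpace

variable {E : Type*} [NormedAddCommGroup E] [InnerProductSpace ℝ E]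

theorem abs_one_div_norm_sub_add_one_div_norm_add_sub_two_div_norm_le {x a : E} (hx : x ≠ 0)
    (ha : 2 * ‖a‖ ≤ ‖x‖) :
    |1 / ‖x - a‖ + 1 / ‖x + a‖ - 2 / ‖x‖| ≤ 16 * ‖a‖ ^ 2 / ‖x‖ ^ 3 :=
  abs_one_div_add_one_div_sub_two_div_le (norm_pos_iff.mpr hx) ha
    (by simpa using abs_norm_sub_norm_le (x - a) x)
    (by simpa using abs_norm_sub_norm_le (x + a) x)
    (by linarith [parallelogram_law_with_norm ℝ x a])

theorem isBigO_cobounded_one_div_norm_sub_add_one_div_norm_add_sub_two_div_norm (a : E) :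
    (fun x : E => 1 / ‖x - a‖ + 1 / ‖x + a‖ - 2 / ‖x‖)
      =O[Bornology.cobounded E] (fun x => ‖x‖ ^ (-3 : ℤ)) := by
  refine IsBigO.of_bound (16 * ‖a‖ ^ 2) ?_
  filter_upwards [tendsto_norm_cobounded_atTop.eventually_gt_atTop (2 * ‖a‖)] with x hx
  have hx₀ : x ≠ 0 := norm_pos_iff.mp ((mul_nonneg zero_le_two (norm_nonneg a)).trans_lt hx)
  rw [Real.norm_eq_abs, norm_zpow, norm_norm, zpow_neg, zpow_ofNat, ← div_eq_mul_inv]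
  exact abs_one_div_norm_sub_add_one_div_norm_add_sub_two_div_norm_le hx₀ hx.le

end InnerProductSpace

theorem stmt_8 (a : EuclideanSpace ℝ (Fin 3)) :
    (fun x : EuclideanSpace ℝ (Fin 3) => 1 / ‖x - a‖ + 1 / ‖x + a‖ - 2 / ‖x‖)
      =O[cocompact (EuclideanSpace ℝ (Fin 3))]
      (fun x => ‖x‖ ^ (-3 : ℤ)) := by
  rw [← Metric.cobounded_eq_cocompact]
  exact isBigO_cobounded_one_div_norm_sub_add_one_div_norm_add_sub_two_div_norm a
end

section
/- Let I be a finite type with at least 2 elements, equipped with: n : I → ℕ with n i ≥ 1 for all i (multiplicities); a symmetric c : I → I → ℕ (intersection numbers, used for i ≠ j); s : I → ℤ (self-intersections); g : I → ℕ (virtual genera); κ : I → ℕ (anticanonical degrees). Assume: (adjunction) for all i, 2(g i) − 2 − s i = −(κ i); (fiber identity) for all i, (n i)(s i) + Σ_{j ≠ i} (n j)(c i j) = 0; (connectedness) the graph on I in which i and j are adjacent iff i ≠ j and c i j > 0 is connected; (boundary) there exist distinct a, b ∈ I with κ a = κ b = 1, n a = n b = 1, and κ i = 0 for every i ∉ {a,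 b}. Then, writing m + 1 for the cardinality of I, there is a bijection e from {0,1,…,m} to I with e(0) = a and e(m) = b such that: n i = 1 and g i = 0 for all i; c(e i)(e j) = 1 if |i − j| = 1 and c(e i)(e j) = 0 if i ≠ j and |i − j| ≠ 1; and s(e i) = −2 + (1 if i = 0 else 0) + (1 if i = m else 0). -/
/-!
Adjunction and `C·Θᵢ = 0` give `∑_{j ≠ i} nⱼ (Θᵢ·Θⱼ) = nᵢ (2 - 2π'(Θᵢ) - (KΘᵢ))`. By connectedness
the left side is positive, so every `π'` vanishes, and the left side is `1` at `a` and `b` and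
`2 nᵢ` elsewhere. Hence `a` meets exactly one other component, once and with multiplicity one, and
every component of multiplicity one other than `a`, `b` already met once by its predecessor meets
exactly one new component, again once and with multiplicity one. The chain from `a` is thus forced;
it cannot run forever, so it reaches `b`, which meets nothing else. The chain is then closed under
meeting, hence is the whole (connected) fiber.
-/

open Finset

lemma Finset.exists_eq_one_of_sum_eq_one {ι : Type*} [DecidableEq ι] {t : Finset ι} {F : ι → ℕ}
    (h : ∑ j ∈ t, F j = 1) : ∃ j ∈ t, F j = 1 ∧ ∀ k ∈ t, k ≠ j → F k = 0 := by
  obtain ⟨j, hj, hFj⟩ := exists_ne_zero_of_sum_ne_zero (h ▸ one_ne_zero)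
  have hsplit := add_sum_erase t F hj
  refine ⟨j, hj, by omega, fun k hk hkj => ?_⟩
  exact sum_eq_zero_iff.mp (by omega) k (mem_erase.mpr ⟨hkj, hk⟩)

section WeightedDegree

variable {I : Type*} [Fintype I] [DecidableEq I]

/-- For a fiber `C = ∑ nⱼ Θⱼ` with `cᵢⱼ = Θᵢ·Θⱼ` this is `(C - nᵢ Θᵢ)·Θᵢ`, which `C·Θᵢ = 0` turns
into `-nᵢ Θᵢ²`. -/
def weightedDegree (n : I → ℕ) (c : I → I → ℕ) (i : I) : ℕ :=
  ∑ j ∈ univ.erase i, n j * c i j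

variable {n : I → ℕ} {c : I → I → ℕ}

lemma weightedDegree_eq {g κ : ℕ} {s : ℤ} {i : I} (hadj : 2 * (g : ℤ) - 2 - s = -(κ : ℤ))
    (hfib : (n i : ℤ) * s + ∑ j ∈ univ.erase i, (n j : ℤ) * (c i j : ℤ) = 0) :
    (weightedDegree n c i : ℤ) = n i * (2 - 2 * g - κ) := by
  rw [weightedDegree]
  push_cast
  linear_combination hfib + (n i : ℤ) * hadj

lemma weightedDegree_pos [Nontrivial I] (hn : ∀ i, 1 ≤ n i) (hcsymm : ∀ i j, c i j = c j i)
    (hconn : (SimpleGraph.fromRel (fun i j => 0 < c i j)).Connected) (i : I) :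
    0 < weightedDegree n c i := by
  have hi : i ∈ (SimpleGraph.fromRel (fun i j => 0 < c i j)).support :=
    hconn.preconnected.support_eq_univ ▸ Set.mem_univ i
  obtain ⟨j, hadj⟩ := (SimpleGraph.mem_support _).mp hi
  rw [SimpleGraph.fromRel_adj, hcsymm j i, or_self] at hadj
  obtain ⟨hij, hcij⟩ := hadj
  calc 0 < n j * c i j := Nat.mul_pos (hn j) hcij
    _ ≤ weightedDegree n c i :=
      single_le_sum (f := fun k => n k * c i k) (fun k _ => Nat.zero_le _)
        (mem_erase.mpr ⟨hij.symm, mem_univ j⟩)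

end WeightedDegree

lemma genus_eq_zero_of_pos {n g κ : ℕ} {w : ℤ} (hw : w = n * (2 - 2 * g - κ)) (hpos : 0 < w) :
    g = 0 := by
  by_contra hg
  have : (1 : ℤ) ≤ g := by exact_mod_cast Nat.one_le_iff_ne_zero.mpr hg
  nlinarith [Int.natCast_nonneg n, Int.natCast_nonneg κ]

/-- In `closed`, `f (i - 1)` is `f 0` at `i = 0`, since subtraction on `ℕ` truncates. -/
structure IsSaturatedChain {I : Type*} (n : I → ℕ) (c : I → I → ℕ) (a : I) (f : ℕ → I) (m : ℕ) :
    Prop where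
  zero : f 0 = a
  injOn : ∀ i ≤ m, ∀ j ≤ m, f i = f j → i = j
  mult_eq_one : ∀ i ≤ m, n (f i) = 1
  link : ∀ i < m, c (f i) (f (i + 1)) = 1
  closed : ∀ i < m, ∀ k, k ≠ f (i - 1) → k ≠ f i → k ≠ f (i + 1) → c (f i) k = 0

namespace IsSaturatedChain

variable {I : Type*} {n : I → ℕ} {c : I → I → ℕ} {a b : I} {f : ℕ → I} {m : ℕ}

lemma c_eq_zero (h : IsSaturatedChain n c a f m) {i j : ℕ} (hij : i + 1 < j) (hj : j ≤ m) :
    c (f i) (f j) = 0 :=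
  h.closed i (by omega) (f j) (fun e => absurd (h.injOn _ hj _ (by omega) e) (by omega))
    (fun e => absurd (h.injOn _ hj _ (by omega) e) (by omega))
    (fun e => absurd (h.injOn _ hj _ (by omega) e) (by omega))

lemma c_eq_ite (h : IsSaturatedChain n c a f m) (hcsymm : ∀ i j, c i j = c j i) {i j : ℕ}
    (hi : i ≤ m) (hj : j ≤ m) (hij : i ≠ j) :
    c (f i) (f j) = if i + 1 = j ∨ j + 1 = i then 1 else 0 := by
  rcases lt_trichotomy (i + 1) j with hlt | rfl | hgt
  · rw [if_neg (by omega), h.c_eq_zero hlt hj]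
  · rw [if_pos (Or.inl rfl), h.link i (by omega)]
  rcases lt_trichotomy (j + 1) i with hlt | rfl | hgt'
  · rw [if_neg (by omega), hcsymm, h.c_eq_zero hlt hi]
  · rw [if_pos (Or.inr rfl), hcsymm, h.link j (by omega)]
  · omega

lemma ne_of_c_ne_zero (h : IsSaturatedChain n c a f m) (hcsymm : ∀ i j, c i j = c j i) {q : I}
    (hq : c (f m) q ≠ 0) (hq₁ : q ≠ f (m - 1)) (hqm : q ≠ f m) : ∀ i ≤ m, f i ≠ q := by
  rintro i hi rfl
  rcases (by omega : i + 1 < m ∨ i = m - 1 ∨ i = m) with hlt | rfl | rfl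
  · exact hq (hcsymm _ _ ▸ h.c_eq_zero hlt le_rfl)
  · exact hq₁ rfl
  · exact hqm rfl

lemma snoc (h : IsSaturatedChain n c a f m) (hcsymm : ∀ i j, c i j = c j i) {q : I}
    (hnq : n q = 1) (hlink : c (f m) q = 1) (hq₁ : q ≠ f (m - 1)) (hqm : q ≠ f m)
    (hclosed : ∀ k, k ≠ f (m - 1) → k ≠ f m → k ≠ q → c (f m) k = 0) :
    IsSaturatedChain n c a (Function.update f (m + 1) q) (m + 1) := by
  have hfresh := h.ne_of_c_ne_zero hcsymm (by omega) hq₁ hqm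
  have hle : ∀ i ≤ m, Function.update f (m + 1) q i = f i :=
    fun i hi => Function.update_of_ne (by omega) _ _
  have htop : Function.update f (m + 1) q (m + 1) = q := Function.update_self _ _ _
  constructor
  · rw [hle 0 (Nat.zero_le _), h.zero]
  · intro i hi j hj hij
    rcases Nat.of_le_succ hi with hi | rfl <;> rcases Nat.of_le_succ hj with hj | rfl
    · exact h.injOn i hi j hj (by rwa [hle i hi, hle j hj] at hij)
    · rw [hle i hi, htop] at hij; exact absurd hij (hfresh i hi)
    · rw [hle j hj, htop] at hij; exact absurd hij.symm (hfresh j hj)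
    · rfl
  · intro i hi
    rcases Nat.of_le_succ hi with hi | rfl
    · rw [hle i hi]; exact h.mult_eq_one i hi
    · rwa [htop]
  · intro i hi
    rcases Nat.lt_succ_iff_lt_or_eq.mp hi with hi | rfl
    · rw [hle i hi.le, hle (i + 1) hi]; exact h.link i hi
    · rwa [hle i le_rfl, htop]
  · intro i hi k hk₁ hk₂ hk₃
    rcases Nat.lt_succ_iff_lt_or_eq.mp hi with hi | rfl
    · rw [hle (i - 1) (by omega), hle i hi.le, hle (i + 1) hi] at *
      exact h.closed i hi k hk₁ hk₂ hk₃
    · rw [hle (i - 1) (by omega), hle i le_rfl, htop] at *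
      exact hclosed k hk₁ hk₂ hk₃

lemma surj (h : IsSaturatedChain n c a f m) (hcsymm : ∀ i j, c i j = c j i)
    (hconn : (SimpleGraph.fromRel (fun i j => 0 < c i j)).Connected)
    (hlast : ∀ k, k ≠ f (m - 1) → k ≠ f m → c (f m) k = 0) (y : I) : ∃ i ≤ m, f i = y := by
  have hstep : ∀ i ≤ m, ∀ y, 0 < c (f i) y → ∃ j ≤ m, f j = y := by
    intro i hi y hy
    by_contra! hy'
    rcases Nat.lt_or_eq_of_le hi with hi | rfl
    · exact hy.ne' (h.closed i hi y (hy' _ (by omega)).symm (hy' _ hi.le).symm (hy' _ hi).symm)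
    · exact hy.ne' (hlast y (hy' _ (by omega)).symm (hy' _ le_rfl).symm)
  have hreach := (SimpleGraph.reachable_iff_reflTransGen a y).mp (hconn.preconnected a y)
  induction hreach with
  | refl => exact ⟨0, Nat.zero_le _, h.zero⟩
  | tail _ hadj ih =>
    obtain ⟨i, hi, rfl⟩ := ih
    rw [SimpleGraph.fromRel_adj, hcsymm _ (f i), or_self] at hadj
    exact hstep i hi _ hadj.2

lemma bijective (h : IsSaturatedChain n c a f m) (hsurj : ∀ y, ∃ i ≤ m, f i = y) :
    Function.Bijective (fun i : Fin (m + 1) => f i) :=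
  ⟨fun i j hij => Fin.ext (h.injOn i (Nat.le_of_lt_succ i.2) j (Nat.le_of_lt_succ j.2) hij),
    fun y => let ⟨i, hi, hfi⟩ := hsurj y; ⟨⟨i, Nat.lt_succ_of_le hi⟩, hfi⟩⟩

variable [Fintype I]

lemma succ_le_card (h : IsSaturatedChain n c a f m) : m + 1 ≤ Fintype.card I := by
  have hinj : Function.Injective (fun i : Fin (m + 1) => f i) := fun i j hij =>
    Fin.ext (h.injOn i (Nat.le_of_lt_succ i.2) j (Nat.le_of_lt_succ j.2) hij)
  simpa using Fintype.card_le_of_injective _ hinj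

variable [DecidableEq I]

lemma weightedDegree_last (h : IsSaturatedChain n c a f m) (hcsymm : ∀ i j, c i j = c j i) :
    weightedDegree n c (f m) =
      ∑ k ∈ (univ.erase (f m)).erase (f (m - 1)), n k * c (f m) k + if m = 0 then 0 else 1 := by
  rcases Nat.eq_zero_or_pos m with rfl | hm
  · simp [weightedDegree]
  have hmem : f (m - 1) ∈ univ.erase (f m) :=
    mem_erase.mpr ⟨fun e => absurd (h.injOn _ (by omega) _ le_rfl e) (by omega), mem_univ _⟩
  have hterm : n (f (m - 1)) * c (f m) (f (m - 1)) = 1 := by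
    have hlink := h.link (m - 1) (by omega)
    rw [Nat.sub_add_cancel hm] at hlink
    rw [h.mult_eq_one _ (by omega), hcsymm, hlink]
  rw [weightedDegree, ← add_sum_erase _ _ hmem, hterm, if_neg hm.ne', add_comm]

lemma exists_next (h : IsSaturatedChain n c a f m) (hn : ∀ i, 1 ≤ n i)
    (hcsymm : ∀ i j, c i j = c j i) (hWa : weightedDegree n c a = 1)
    (hW : ∀ v, v ≠ a → v ≠ b → weightedDegree n c v = 2 * n v) (hb : f m ≠ b) :
    ∃ q, n q = 1 ∧ c (f m) q = 1 ∧ q ≠ f (m - 1) ∧ q ≠ f m ∧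
      ∀ k, k ≠ f (m - 1) → k ≠ f m → k ≠ q → c (f m) k = 0 := by
  have hrest : ∑ k ∈ (univ.erase (f m)).erase (f (m - 1)), n k * c (f m) k = 1 := by
    have hlast := h.weightedDegree_last hcsymm
    rcases Nat.eq_zero_or_pos m with rfl | hm
    · rw [h.zero, hWa] at hlast
      simpa [h.zero] using hlast.symm
    · have ha : f m ≠ a := fun e =>
        absurd (h.injOn _ le_rfl _ (Nat.zero_le _) (e.trans h.zero.symm)) (by omega)
      rw [hW _ ha hb, h.mult_eq_one m le_rfl, if_neg hm.ne'] at hlast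
      omega
  obtain ⟨q, hq, hq1, hq0⟩ := exists_eq_one_of_sum_eq_one hrest
  obtain ⟨hq₁, hqm⟩ : q ≠ f (m - 1) ∧ q ≠ f m := by simpa using hq
  refine ⟨q, (mul_eq_one.mp hq1).1, (mul_eq_one.mp hq1).2, hq₁, hqm, fun k hk₁ hkm hkq => ?_⟩
  exact (Nat.mul_eq_zero.mp (hq0 k (by simp [hk₁, hkm]) hkq)).resolve_left
    (Nat.one_le_iff_ne_zero.mp (hn k))

lemma closed_last (h : IsSaturatedChain n c a f m) (hn : ∀ i, 1 ≤ n i)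
    (hcsymm : ∀ i j, c i j = c j i) (hm : m ≠ 0) (hW : weightedDegree n c (f m) = 1) :
    ∀ k, k ≠ f (m - 1) → k ≠ f m → c (f m) k = 0 := by
  have hrest := h.weightedDegree_last hcsymm
  rw [hW, if_neg hm] at hrest
  intro k hk₁ hkm
  have hzero : ∑ k ∈ (univ.erase (f m)).erase (f (m - 1)), n k * c (f m) k = 0 := by omega
  exact (Nat.mul_eq_zero.mp (sum_eq_zero_iff.mp hzero k (by simp [hk₁, hkm]))).resolve_left
    (Nat.one_le_iff_ne_zero.mp (hn k))

end IsSaturatedChain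

section

variable {I : Type*} [Fintype I] [DecidableEq I] {n : I → ℕ} {c : I → I → ℕ} {a b : I}

lemma exists_isSaturatedChain_last_eq (hn : ∀ i, 1 ≤ n i) (hcsymm : ∀ i j, c i j = c j i)
    (hna : n a = 1) (hWa : weightedDegree n c a = 1)
    (hW : ∀ v, v ≠ a → v ≠ b → weightedDegree n c v = 2 * n v) :
    ∃ f m, IsSaturatedChain n c a f m ∧ f m = b := by
  by_contra! hne
  have hchain : ∀ m, ∃ f, IsSaturatedChain n c a f m := by
    intro m
    induction m with
    | zero =>
      exact ⟨fun _ => a, rfl, fun i hi j hj _ => by omega, fun _ _ => hna,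
        fun _ hi => absurd hi (by omega), fun _ hi => absurd hi (by omega)⟩
    | succ m ih =>
      obtain ⟨f, hf⟩ := ih
      obtain ⟨q, hnq, hlink, hq₁, hqm, hclosed⟩ := hf.exists_next hn hcsymm hWa hW (hne f m hf)
      exact ⟨_, hf.snoc hcsymm hnq hlink hq₁ hqm hclosed⟩
  obtain ⟨f, hf⟩ := hchain (Fintype.card I)
  exact absurd hf.succ_le_card (by omega)

end

lemma natCast_apply_eq_ite {I : Type*} {m : ℕ} (e : Fin (m + 1) ≃ I) {κ : I → ℕ}
    (hne : e 0 ≠ e (Fin.last m)) (h₀ : κ (e 0) = 1) (hlast : κ (e (Fin.last m)) = 1)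
    (hκ : ∀ i, i ≠ e 0 → i ≠ e (Fin.last m) → κ i = 0) (i : Fin (m + 1)) :
    (κ (e i) : ℤ) = (if i = 0 then 1 else 0) + if i = Fin.last m then 1 else 0 := by
  by_cases hi₀ : i = 0
  · subst hi₀
    have h0l : (0 : Fin (m + 1)) ≠ Fin.last m := fun h => hne (congrArg e h)
    simp [h₀, h0l]
  by_cases hil : i = Fin.last m
  · subst hil
    simp [hlast, hi₀]
  · simp [hκ _ (e.injective.ne hi₀) (e.injective.ne hil), hi₀, hil]

theorem stmt_9_general (I : Type*) [Fintype I] [DecidableEq I]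
    (n : I → ℕ) (hn : ∀ i, 1 ≤ n i)
    (c : I → I → ℕ) (hcsymm : ∀ i j, c i j = c j i)
    (s : I → ℤ) (g : I → ℕ) (κ : I → ℕ)
    (hadj : ∀ i, 2 * (g i : ℤ) - 2 - s i = -(κ i : ℤ))
    (hfib : ∀ i, (n i : ℤ) * s i + ∑ j ∈ Finset.univ.erase i, (n j : ℤ) * (c i j : ℤ) = 0)
    (hconn : (SimpleGraph.fromRel (fun i j => 0 < c i j)).Connected)
    (a b : I) (hab : a ≠ b) (hκa : κ a = 1) (hκb : κ b = 1)
    (hna : n a = 1) (hnb : n b = 1)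
    (hκ : ∀ i, i ≠ a → i ≠ b → κ i = 0) :
    ∃ m : ℕ, Fintype.card I = m + 1 ∧
      ∃ e : Fin (m + 1) ≃ I, e 0 = a ∧ e (Fin.last m) = b ∧
        (∀ i, n i = 1) ∧ (∀ i, g i = 0) ∧
        (∀ i j : Fin (m + 1), i ≠ j →
          c (e i) (e j) = if (i : ℕ) + 1 = (j : ℕ) ∨ (j : ℕ) + 1 = (i : ℕ) then 1 else 0) ∧
        (∀ i : Fin (m + 1), s (e i) =
          -2 + (if i = 0 then 1 else 0) + (if i = Fin.last m then 1 else 0)) := by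
  have : Nontrivial I := nontrivial_of_ne a b hab
  have hW i := weightedDegree_eq (c := c) (hadj i) (hfib i)
  have hg i : g i = 0 :=
    genus_eq_zero_of_pos (hW i) (by exact_mod_cast weightedDegree_pos hn hcsymm hconn i)
  have hWa : weightedDegree n c a = 1 := by
    have := hW a; simp [hg, hκa, hna] at this; exact_mod_cast this
  have hWb : weightedDegree n c b = 1 := by
    have := hW b; simp [hg, hκb, hnb] at this; exact_mod_cast this
  have hWv v (hva : v ≠ a) (hvb : v ≠ b) : weightedDegree n c v = 2 * n v := by
    have := hW v; simp [hg, hκ v hva hvb] at this; exact_mod_cast this.trans (mul_comm _ _)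
  obtain ⟨f, m, hf, hfm⟩ := exists_isSaturatedChain_last_eq hn hcsymm hna hWa hWv
  have hm : m ≠ 0 := by rintro rfl; exact hab (hf.zero.symm.trans hfm)
  have hsurj := hf.surj hcsymm hconn (hf.closed_last hn hcsymm hm (hfm ▸ hWb))
  let e := Equiv.ofBijective _ (hf.bijective hsurj)
  have he0 : e 0 = a := hf.zero
  have hem : e (Fin.last m) = b := hfm
  refine ⟨m, by simpa using (Fintype.card_congr e).symm, e, he0, hem, fun y => ?_, hg,
    fun i j hij => hf.c_eq_ite hcsymm i.is_le j.is_le (Fin.val_ne_of_ne hij), fun i => ?_⟩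
  · obtain ⟨i, hi, rfl⟩ := hsurj y
    exact hf.mult_eq_one i hi
  · have hs : s (e i) = κ (e i) - 2 := by linarith [hadj (e i), hg (e i)]
    rw [hs, natCast_apply_eq_ite e (he0 ▸ hem ▸ hab) (he0 ▸ hκa) (hem ▸ hκb) (he0 ▸ hem ▸ hκ)]
    ring

theorem stmt_9 (I : Type*) [Fintype I] [DecidableEq I]
    (hcard : 2 ≤ Fintype.card I)
    (n : I → ℕ) (hn : ∀ i, 1 ≤ n i)
    (c : I → I → ℕ) (hcsymm : ∀ i j, c i j = c j i)
    (s : I → ℤ) (g : I → ℕ) (κ : I → ℕ)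
    (hadj : ∀ i, 2 * (g i : ℤ) - 2 - s i = -(κ i : ℤ))
    (hfib : ∀ i, (n i : ℤ) * s i + ∑ j ∈ Finset.univ.erase i, (n j : ℤ) * (c i j : ℤ) = 0)
    (hconn : (SimpleGraph.fromRel (fun i j => 0 < c i j)).Connected)
    (a b : I) (hab : a ≠ b) (hκa : κ a = 1) (hκb : κ b = 1)
    (hna : n a = 1) (hnb : n b = 1)
    (hκ : ∀ i, i ≠ a → i ≠ b → κ i = 0) :
    ∃ m : ℕ, Fintype.card I = m + 1 ∧
      ∃ e : Fin (m + 1) ≃ I, e 0 = a ∧ e (Fin.last m) = b ∧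
        (∀ i, n i = 1) ∧ (∀ i, g i = 0) ∧
        (∀ i j : Fin (m + 1), i ≠ j →
          c (e i) (e j) = if (i : ℕ) + 1 = (j : ℕ) ∨ (j : ℕ) + 1 = (i : ℕ) then 1 else 0) ∧
        (∀ i : Fin (m + 1), s (e i) =
          -2 + (if i = 0 then 1 else 0) + (if i = Fin.last m then 1 else 0)) :=
  stmt_9_general I n hn c hcsymm s g κ hadj hfib hconn a b hab hκa hκb hna hnb hκ
end

section
/- Let I be a finite type with at least 2 elements, equipped with: n : I → ℕ with n i ≥ 1 for all i; a symmetric c : I → I → ℕ; s : I → ℤ; g : I → ℕ; κ : I → ℕ. Assume: (adjunction) for all i, 2(g i) − 2 − s i = −(κ i); (fiber identity) for all i, (n i)(s i) + Σ_{j ≠ i} (n j)(c i j) = 0; (connectedness) the graph on I in which i and j are adjacent iff i ≠ j and c i j > 0 is connected; (boundary) there exists a ∈ I with κ a = 1, n a = 2, and κ i = 0 for every i ≠ a. Then there exists m ≥ 0 such that I has exactly m + 3 elements, and there is a bijection e from {0,1,…,m+2} to I with e(0) = a such that: g i = 0 for all i; n(e i) = 2 for 0 ≤ i ≤ m and n(e(m+1))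 = n(e(m+2)) = 1; c(e i)(e j) = 1 exactly for the unordered pairs {i, i+1} with 0 ≤ i ≤ m−1 together with {m, m+1} and {m, m+2}, and c(e i)(e j) = 0 for all other pairs with i ≠ j; s(e 0) = −1 and s(e i) = −2 for 1 ≤ i ≤ m+2. -/
/-!
Write `sᵢ = Θᵢ²` and `c i j = (ΘᵢΘⱼ)`. Adjunction gives `sᵢ = 2gᵢ - 2 + κᵢ`, while `(CΘᵢ) = 0`
and connectedness make every `sᵢ` negative; hence all `gᵢ = 0`, `sₐ = -1` and `sᵢ = -2`
otherwise. What remains is a connected weighted graph with `∑ⱼ nⱼ c i j = 2nᵢ`, except `= 2` at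
the root `a`. At the root this sum leaves two possibilities: a single neighbour of multiplicity 2
joined by a simple edge, or two neighbours of multiplicity 1, which are then leaves and exhaust
the graph (the fork of `D`). In the first case deleting the root gives a graph of the same kind
rooted at that neighbour, and induction on the number of components prolongs the chain by one.
-/

open Finset

namespace DynkinD

/- Multiplicities and intersection numbers of `2Θ₀ + ⋯ + 2Θₘ + Θₘ₊₁ + Θₘ₊₂`: the chain
`Θ₀ - ⋯ - Θₘ` with `Θₘ₊₁` and `Θₘ₊₂` both attached to `Θₘ`. -/
def mult (m : ℕ) (i : Fin (m + 3)) : ℕ := if (i : ℕ) ≤ m then 2 else 1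

def edge (m : ℕ) (i j : Fin (m + 3)) : ℕ :=
  if ((i : ℕ) + 1 = (j : ℕ) ∧ (i : ℕ) ≤ m) ∨
      ((j : ℕ) + 1 = (i : ℕ) ∧ (j : ℕ) ≤ m) ∨
      ((i : ℕ) = m ∧ (j : ℕ) = m + 2) ∨
      ((j : ℕ) = m ∧ (i : ℕ) = m + 2)
  then 1 else 0

@[simp] lemma mult_zero (m : ℕ) : mult (m + 1) 0 = 2 := by simp [mult]

@[simp] lemma mult_succ (m : ℕ) (i : Fin (m + 3)) : mult (m + 1) i.succ = mult m i := by
  simp [mult]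

@[simp] lemma edge_zero_zero (m : ℕ) : edge (m + 1) 0 0 = 0 := by simp [edge]

@[simp] lemma edge_zero_succ (m : ℕ) (j : Fin (m + 3)) :
    edge (m + 1) 0 j.succ = if (j : ℕ) = 0 then 1 else 0 := by
  simp [edge]

@[simp] lemma edge_succ_zero (m : ℕ) (i : Fin (m + 3)) :
    edge (m + 1) i.succ 0 = if (i : ℕ) = 0 then 1 else 0 := by
  simp [edge]

@[simp] lemma edge_succ_succ (m : ℕ) (i j : Fin (m + 3)) :
    edge (m + 1) i.succ j.succ = edge m i j := by
  simp only [edge, Fin.val_succ]; congr 1; simp only [eq_iff_iff]; omega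

variable {I : Type*}

def IsLabelling (n : I → ℕ) (c : I → I → ℕ) (a : I) {m : ℕ} (e : Fin (m + 3) ≃ I) : Prop :=
  e 0 = a ∧ (∀ i, n (e i) = mult m i) ∧ ∀ i j, c (e i) (e j) = edge m i j

end DynkinD

theorem SimpleGraph.Preconnected.mem_of_adj_closed {V : Type*} {G : SimpleGraph V}
    (hG : G.Preconnected) {S : Set V} (hS : ∀ u v, G.Adj u v → u ∈ S → v ∈ S) {a : V}
    (ha : a ∈ S) (x : V) : x ∈ S := by
  induction (G.reachable_iff_reflTransGen a x).mp (hG a x) with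
  | refl => exact ha
  | tail _ huv ih => exact hS _ _ huv ih

theorem Fintype.sum_eq_two_cases {ι : Type*} [Fintype ι] [DecidableEq ι] {f : ι → ℕ}
    (h : ∑ i, f i = 2) :
    (∃ b, f b = 2 ∧ ∀ j ≠ b, f j = 0) ∨
      ∃ u w, u ≠ w ∧ f u = 1 ∧ f w = 1 ∧ ∀ j, j ≠ u → j ≠ w → f j = 0 := by
  obtain ⟨b, -, hb⟩ := exists_ne_zero_of_sum_ne_zero (s := univ) (f := f) (by omega)
  rw [← add_sum_erase _ _ (mem_univ b)] at h
  rcases (show f b = 2 ∨ f b = 1 by omega) with hb2 | hb1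
  · refine .inl ⟨b, hb2, fun j hj => ?_⟩
    exact sum_eq_zero_iff.mp (by omega) j (mem_erase.mpr ⟨hj, mem_univ j⟩)
  · obtain ⟨w, hw, hw0⟩ := exists_ne_zero_of_sum_ne_zero (s := univ.erase b) (f := f) (by omega)
    rw [← add_sum_erase _ _ hw] at h
    refine .inr ⟨b, w, (ne_of_mem_erase hw).symm, hb1, by omega, fun j hjb hjw => ?_⟩
    exact sum_eq_zero_iff.mp (by omega) j (mem_erase.mpr ⟨hjw, mem_erase.mpr ⟨hjb, mem_univ j⟩⟩)

/-- The intersection data of a fibre `∑ nᵢΘᵢ` with `c i j = (ΘᵢΘⱼ)` off the diagonal: `degree`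
is `(CΘᵢ) = 0` for `Θₐ² = -1` and `Θᵢ² = -2` (`i ≠ a`). -/
structure RootedFiberGraph {I : Type*} [Fintype I] [DecidableEq I]
    (n : I → ℕ) (c : I → I → ℕ) (a : I) : Prop where
  one_le : ∀ i, 1 ≤ n i
  symm : ∀ i j, c i j = c j i
  diag : ∀ i, c i i = 0
  connected : (SimpleGraph.fromRel fun i j => 0 < c i j).Connected
  root : n a = 2
  degree : ∀ i, ∑ j, n j * c i j = if i = a then 2 else 2 * n i

namespace RootedFiberGraph

variable {I : Type*} [Fintype I] [DecidableEq I] {n : I → ℕ} {c : I → I → ℕ} {a : I}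

lemma adj_iff (h : RootedFiberGraph n c a) {i j : I} :
    (SimpleGraph.fromRel fun i j => 0 < c i j).Adj i j ↔ 0 < c i j := by
  rw [SimpleGraph.fromRel_adj, h.symm j i, or_self, and_iff_right_iff_imp]
  rintro hc rfl
  simp [h.diag] at hc

lemma ne_root_of_edge (h : RootedFiberGraph n c a) {j : I} (hj : 0 < c a j) : j ≠ a := by
  rintro rfl; simp [h.diag] at hj

lemma root_edge_eq_one (h : RootedFiberGraph n c a) {j : I} (hj : 0 < c a j) : c a j = 1 := by
  have hja := h.ne_root_of_edge hj
  have h1 := single_le_sum (f := fun k => n k * c j k) (fun _ _ => Nat.zero_le _) (mem_univ a)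
  have h2 := single_le_sum (f := fun k => n k * c a k) (fun _ _ => Nat.zero_le _) (mem_univ j)
  rw [h.degree, if_neg hja, h.root, h.symm j a] at h1
  rw [h.degree, if_pos rfl] at h2
  have := h.one_le j
  nlinarith

lemma leaf (h : RootedFiberGraph n c a) {u : I} (hu : c a u = 1) (hnu : n u = 1) (j : I)
    (hj : j ≠ a) : c u j = 0 := by
  have hdeg := h.degree u
  rw [if_neg (h.ne_root_of_edge (by omega)), hnu, ← add_sum_erase _ _ (mem_univ a), h.root,
    h.symm u a, hu] at hdeg
  have hrest : ∑ k ∈ univ.erase a, n k * c u k = 0 := by omega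
  have hterm := Finset.sum_eq_zero_iff.mp hrest j (mem_erase.mpr ⟨hj, mem_univ j⟩)
  exact (Nat.mul_eq_zero.mp hterm).resolve_left (by have := h.one_le j; omega)

lemma root_cases (h : RootedFiberGraph n c a) :
    (∃ b, n b = 2 ∧ c a b = 1 ∧ ∀ j ≠ b, c a j = 0) ∨
      ∃ u w, u ≠ w ∧ n u = 1 ∧ n w = 1 ∧ c a u = 1 ∧ c a w = 1 ∧
        ∀ j, j ≠ u → j ≠ w → c a j = 0 := by
  have hdeg := h.degree a
  rw [if_pos rfl] at hdeg
  have hzero : ∀ j, n j * c a j = 0 → c a j = 0 := fun j hj =>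
    (Nat.mul_eq_zero.mp hj).resolve_left (by have := h.one_le j; omega)
  have hone : ∀ j, n j * c a j ≠ 0 → c a j = 1 := fun j hj => h.root_edge_eq_one (by
    rw [Nat.pos_iff_ne_zero]; exact right_ne_zero_of_mul hj)
  rcases Fintype.sum_eq_two_cases hdeg with ⟨b, hb, hrest⟩ | ⟨u, w, huw, hu, hw, hrest⟩
  · have hab := hone b (by omega)
    exact .inl ⟨b, by simpa [hab] using hb, hab, fun j hj => hzero j (hrest j hj)⟩
  · obtain ⟨hnu, hau⟩ := mul_eq_one.mp hu
    obtain ⟨hnw, haw⟩ := mul_eq_one.mp hw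
    exact .inr ⟨u, w, huw, hnu, hnw, hau, haw, fun j hju hjw => hzero j (hrest j hju hjw)⟩

lemma exists_isLabelling_of_two_leaves (h : RootedFiberGraph n c a) {u w : I} (huw : u ≠ w)
    (hnu : n u = 1) (hnw : n w = 1) (hau : c a u = 1) (haw : c a w = 1)
    (hzero : ∀ j, j ≠ u → j ≠ w → c a j = 0) :
    ∃ e : Fin 3 ≃ I, DynkinD.IsLabelling n c a e := by
  have hua := h.ne_root_of_edge (j := u) (by omega)
  have hwa := h.ne_root_of_edge (j := w) (by omega)
  have huw' := h.leaf hau hnu w hwa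
  have hwu := h.leaf haw hnw u hua
  have hcover : ∀ x, x ∈ ({a, u, w} : Set I) := by
    refine h.connected.preconnected.mem_of_adj_closed (a := a) (fun x y hxy hx => ?_) (by simp)
    rw [h.adj_iff] at hxy
    rcases hx with rfl | rfl | rfl
    · by_contra hy
      simp only [Set.mem_insert_iff, Set.mem_singleton_iff, not_or] at hy
      simp [hzero y hy.2.1 hy.2.2] at hxy
    · by_contra hy
      simp [h.leaf hau hnu y (by simp_all)] at hxy
    · by_contra hy
      simp [h.leaf haw hnw y (by simp_all)] at hxy
  let e : Fin 3 ≃ I := Equiv.ofBijective ![a, u, w] ⟨by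
    intro i j hij
    fin_cases i <;> fin_cases j <;> simp_all [eq_comm], fun x => by
    rcases hcover x with rfl | rfl | rfl
    exacts [⟨0, rfl⟩, ⟨1, rfl⟩, ⟨2, rfl⟩]⟩
  have he : ⇑e = ![a, u, w] := rfl
  refine ⟨e, rfl, fun i => ?_, fun i j => ?_⟩
  · fin_cases i <;> simp [he, DynkinD.mult, h.root, hnu, hnw]
  · fin_cases i <;> fin_cases j <;>
      simp [he, DynkinD.edge, h.diag, hau, haw, huw', hwu, h.symm u a, h.symm w a]

lemma restrict (h : RootedFiberGraph n c a) {b : I} (hba : b ≠ a) (hnb : n b = 2)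
    (hab : c a b = 1) (hzero : ∀ j ≠ b, c a j = 0) :
    RootedFiberGraph (fun i : {i // i ≠ a} => n i) (fun i j => c i j) ⟨b, hba⟩ where
  one_le i := h.one_le i
  symm i j := h.symm i j
  diag i := h.diag i
  connected := by
    have hpre := h.connected.preconnected.induce_of_degree_eq_one (s := {a}ᶜ) fun v hv => by
      rw [Set.mem_compl_singleton_iff, not_not] at hv
      subst hv
      intro x hx y hy
      rw [SimpleGraph.mem_neighborSet, h.adj_iff] at hx hy
      by_contra hxy
      rcases eq_or_ne x b with rfl | hxb
      · exact (hzero y (Ne.symm hxy)).not_gt hy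
      · exact (hzero x hxb).not_gt hx
    have heq : (SimpleGraph.fromRel fun i j : {i // i ≠ a} => 0 < c i j) =
        (SimpleGraph.fromRel fun i j => 0 < c i j).induce {a}ᶜ := by
      ext x y
      simp only [SimpleGraph.fromRel_adj, ne_eq, Subtype.ext_iff]
      rfl
    have : Nonempty {i // i ≠ a} := ⟨⟨b, hba⟩⟩
    exact ⟨heq ▸ hpre⟩
  root := hnb
  degree := by
    rintro ⟨i, hi⟩
    have hdeg := h.degree i
    rw [Fintype.sum_eq_add_sum_subtype_ne _ a, h.root, if_neg hi, h.symm i a] at hdeg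
    simp only [Subtype.mk.injEq]
    split_ifs with hib
    · subst hib; omega
    · rw [hzero i hib] at hdeg; omega

lemma exists_isLabelling_of_restrict (h : RootedFiberGraph n c a) {b : I} (hba : b ≠ a)
    (hab : c a b = 1) (hzero : ∀ j ≠ b, c a j = 0) {m : ℕ} {e' : Fin (m + 3) ≃ {i // i ≠ a}}
    (he' : DynkinD.IsLabelling (fun i : {i // i ≠ a} => n i) (fun i j => c i j) ⟨b, hba⟩ e') :
    ∃ e : Fin (m + 1 + 3) ≃ I, DynkinD.IsLabelling n c a e := by
  obtain ⟨he'0, hn', hc'⟩ := he'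
  let e : Fin (m + 3 + 1) ≃ I :=
    (finSuccEquiv _).trans ((Equiv.optionCongr e').trans (Equiv.optionSubtypeNe a))
  have he0 : e 0 = a := by simp [e]
  have hesucc (i : Fin (m + 3)) : e i.succ = e' i := by simp [e]
  have hca (j : Fin (m + 3)) : c a (e' j) = if (j : ℕ) = 0 then 1 else 0 := by
    split_ifs with hj
    · rw [show j = 0 from Fin.ext hj, he'0, hab]
    · refine hzero _ fun hjb => hj ?_
      have hj0 : e' j = e' 0 := by rw [he'0]; exact Subtype.ext hjb
      simp [e'.injective hj0]
  refine ⟨e, he0, fun i => ?_, fun i j => ?_⟩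
  · cases i using Fin.cases with
    | zero => simp [he0, h.root]
    | succ i => simp [hesucc, hn']
  · cases i using Fin.cases <;> cases j using Fin.cases
    · simp [he0, h.diag]
    · simp [he0, hesucc, hca]
    · simp [he0, hesucc, h.symm _ a, hca]
    · simp [hesucc, hc']

theorem exists_isLabelling (h : RootedFiberGraph n c a) :
    ∃ m, ∃ e : Fin (m + 3) ≃ I, DynkinD.IsLabelling n c a e := by
  induction hk : Fintype.card I using Nat.strong_induction_on generalizing I with
  | _ k ih =>
    rcases h.root_cases with ⟨b, hnb, hab, hzero⟩ | ⟨u, w, huw, hnu, hnw, hau, haw, hzero⟩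
    · have hba : b ≠ a := h.ne_root_of_edge (by omega)
      obtain ⟨m, e', he'⟩ := ih _ (hk ▸ Fintype.card_subtype_lt (not_not.mpr rfl))
        (h.restrict hba hnb hab hzero) rfl
      exact ⟨m + 1, h.exists_isLabelling_of_restrict hba hab hzero he'⟩
    · exact ⟨0, h.exists_isLabelling_of_two_leaves huw hnu hnw hau haw hzero⟩

end RootedFiberGraph

def dropDiag {I : Type*} [DecidableEq I] (c : I → I → ℕ) (i j : I) : ℕ :=
  if i = j then 0 else c i j

section dropDiag

variable {I : Type*} [DecidableEq I] {c : I → I → ℕ}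

lemma dropDiag_of_ne {i j : I} (hij : i ≠ j) : dropDiag c i j = c i j := if_neg hij

lemma fromRel_dropDiag :
    (SimpleGraph.fromRel fun i j => 0 < dropDiag c i j) =
      SimpleGraph.fromRel fun i j => 0 < c i j := by
  ext i j
  simp only [SimpleGraph.fromRel_adj]
  exact and_congr_right fun hij => by rw [dropDiag_of_ne hij, dropDiag_of_ne (Ne.symm hij)]

lemma sum_mul_dropDiag [Fintype I] (n : I → ℕ) (i : I) :
    ∑ j, n j * dropDiag c i j = ∑ j ∈ univ.erase i, n j * c i j := by
  rw [← add_sum_erase _ _ (mem_univ i), dropDiag, if_pos rfl, mul_zero, zero_add]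
  exact sum_congr rfl fun j hj => by rw [dropDiag_of_ne (ne_of_mem_erase hj).symm]

end dropDiag

section fiber

variable {I : Type*} [Fintype I] [DecidableEq I] {n : I → ℕ} {c : I → I → ℕ}

lemma selfIntersection_neg_of_connected [Nontrivial I] (hn : ∀ i, 1 ≤ n i)
    (hc : ∀ i j, c i j = c j i) (hconn : (SimpleGraph.fromRel fun i j => 0 < c i j).Connected)
    {s : I → ℤ} (hfib : ∀ i, (n i : ℤ) * s i + ∑ j ∈ univ.erase i, (n j : ℤ) * (c i j : ℤ) = 0)
    (i : I) : s i < 0 := by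
  obtain ⟨j, hij, hcij⟩ := hconn.preconnected.exists_adj_of_nontrivial i
  simp only [hc j i, or_self] at hcij
  have hterm : (1 : ℤ) ≤ n j * c i j := by
    have := hn j
    exact_mod_cast Nat.one_le_iff_ne_zero.mpr (by positivity)
  have hsum := single_le_sum (f := fun k => (n k : ℤ) * c i k) (fun _ _ => by positivity)
    (mem_erase.mpr ⟨Ne.symm hij, mem_univ j⟩)
  have hfi := hfib i
  have hni : (1 : ℤ) ≤ n i := by exact_mod_cast hn i
  nlinarith

lemma RootedFiberGraph.of_fiber (hn : ∀ i, 1 ≤ n i) (hc : ∀ i j, c i j = c j i)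
    (hconn : (SimpleGraph.fromRel fun i j => 0 < c i j).Connected) {a : I} (hna : n a = 2)
    {s : I → ℤ} (hs : ∀ i, s i = if i = a then -1 else -2)
    (hfib : ∀ i, (n i : ℤ) * s i + ∑ j ∈ univ.erase i, (n j : ℤ) * (c i j : ℤ) = 0) :
    RootedFiberGraph n (dropDiag c) a where
  one_le := hn
  symm i j := by simp only [dropDiag, eq_comm, hc]
  diag _ := if_pos rfl
  connected := by rwa [fromRel_dropDiag]
  root := hna
  degree i := by
    have hfi := hfib i
    rw [sum_mul_dropDiag]
    zify
    split_ifs with hia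
    · subst hia
      rw [hs, if_pos rfl, hna] at hfi
      push_cast at hfi
      linarith
    · rw [hs, if_neg hia] at hfi
      linarith

end fiber

theorem stmt_10 (I : Type*) [Fintype I] [DecidableEq I]
    (hcard : 2 ≤ Fintype.card I)
    (n : I → ℕ) (hn : ∀ i, 1 ≤ n i)
    (c : I → I → ℕ) (hcsymm : ∀ i j, c i j = c j i)
    (s : I → ℤ) (g : I → ℕ) (κ : I → ℕ)
    (hadj : ∀ i, 2 * (g i : ℤ) - 2 - s i = -(κ i : ℤ))
    (hfib : ∀ i, (n i : ℤ) * s i + ∑ j ∈ Finset.univ.erase i, (n j : ℤ) * (c i j : ℤ) = 0)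
    (hconn : (SimpleGraph.fromRel (fun i j => 0 < c i j)).Connected)
    (a : I) (hκa : κ a = 1) (hna : n a = 2)
    (hκ : ∀ i, i ≠ a → κ i = 0) :
    ∃ m : ℕ, Fintype.card I = m + 3 ∧
      ∃ e : Fin (m + 3) ≃ I, e 0 = a ∧
        (∀ i, g i = 0) ∧
        (∀ i : Fin (m + 3), n (e i) = if (i : ℕ) ≤ m then 2 else 1) ∧
        (∀ i j : Fin (m + 3), i ≠ j →
          c (e i) (e j) =
            if ((i : ℕ) + 1 = (j : ℕ) ∧ (i : ℕ) ≤ m) ∨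
                ((j : ℕ) + 1 = (i : ℕ) ∧ (j : ℕ) ≤ m) ∨
                ((i : ℕ) = m ∧ (j : ℕ) = m + 2) ∨
                ((j : ℕ) = m ∧ (i : ℕ) = m + 2)
            then 1 else 0) ∧
        (∀ i : Fin (m + 3), s (e i) = if (i : ℕ) = 0 then -1 else -2) := by
  have : Nontrivial I := Fintype.one_lt_card_iff_nontrivial.mp hcard
  have hgs : ∀ i, g i = 0 ∧ s i = if i = a then -1 else -2 := fun i => by
    have hneg := selfIntersection_neg_of_connected hn hcsymm hconn hfib i
    have hadji := hadj i
    by_cases hia : i = a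
    · subst hia
      rw [hκa] at hadji
      rw [if_pos rfl]
      omega
    · rw [hκ i hia] at hadji
      rw [if_neg hia]
      omega
  obtain ⟨m, e, he0, hne, hce⟩ :=
    (RootedFiberGraph.of_fiber hn hcsymm hconn hna (fun i => (hgs i).2) hfib).exists_isLabelling
  refine ⟨m, by rw [← Fintype.card_congr e, Fintype.card_fin], e, he0, fun i => (hgs i).1, hne,
    fun i j hij => ?_, fun i => ?_⟩
  · rw [← dropDiag_of_ne (c := c) (e.injective.ne hij)]
    exact hce i j
  · have hia : e i = a ↔ (i : ℕ) = 0 := by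
      rw [← he0, e.injective.eq_iff, Fin.ext_iff, Fin.val_zero]
    simp only [(hgs _).2, hia]
end

section
/- Let k ≥ 1, let P₁, …, P_k, z, x, y, q, r be complex numbers with z ≠ 0. Set C = ∏_{α=1}^{k}(−P_α) and p = zr + C, and assume p² − z q² = ∏_{α=1}^{k}(P_α² − z). Then the equality ((zr + (−i)^k z y)/2 + C)·((r − (−i)^k y)/2) = ((q + (−i)^k x)/2)·((q − (−i)^k x)/2) holds if and only if x² − z y² = (1/(−z))·(∏_{α=1}^{k}(z − P_α²) − ∏_{α=1}^{k}(−P_α²)) + 2(∏_{α=1}^{k}(−iP_α))·y. -/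
/-!
Put `ε = (-i)^k`, so `ε⁴ = 1`, `B = ∏ P α`, so `∏ (-P α) = ε² B`, and `D = ∏ (P α² - z)`.
Multiplied by `4z`, the compatibility equation becomes
`(D - ε⁴ B²) - ε² z² y² - 2 ε³ B z y + ε² z x² = 0` once `(z r + ε² B)² - z q² = D` is used to
eliminate `r` and `q`. Multiplying by `ε²` and dividing by `z` gives the equation of the surface,
because `∏ (z - P α²) = ε² D`, `∏ (-P α²) = ε² B²` and `∏ (-i P α) = ε B`.
-/

theorem compatibility_iff_surface_eq {K : Type*} [Field K] [CharZero K] {ε B D z x y q r : K}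
    (hε : ε ^ 4 = 1) (hz : z ≠ 0) (hpq : (z * r + ε ^ 2 * B) ^ 2 - z * q ^ 2 = D) :
    ((z * r + ε * z * y) / 2 + ε ^ 2 * B) * ((r - ε * y) / 2) =
        (q + ε * x) / 2 * ((q - ε * x) / 2) ↔
      x ^ 2 - z * y ^ 2 = 1 / (-z) * (ε ^ 2 * D - ε ^ 2 * B ^ 2) + 2 * (ε * B) * y := by
  have hε0 : ε ≠ 0 := by
    rintro rfl
    norm_num at hε
  have hzinv : z * (1 / -z) = -1 := by field_simp
  have key : z * (x ^ 2 - z * y ^ 2 - (1 / (-z) * (ε ^ 2 * D - ε ^ 2 * B ^ 2) + 2 * (ε * B) * y)) =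
      4 * ε ^ 2 * z * (((z * r + ε * z * y) / 2 + ε ^ 2 * B) * ((r - ε * y) / 2) -
        (q + ε * x) / 2 * ((q - ε * x) / 2)) := by
    linear_combination (-(ε ^ 2 * D - ε ^ 2 * B ^ 2)) * hzinv + (-ε ^ 2) * hpq +
      ((z * y + ε * B) ^ 2 - z * x ^ 2) * hε
  have hfactor : 4 * ε ^ 2 * z ≠ 0 :=
    mul_ne_zero (mul_ne_zero (by norm_num) (pow_ne_zero 2 hε0)) hz
  rw [← sub_eq_zero, ← sub_eq_zero (a := x ^ 2 - z * y ^ 2), ← mul_eq_zero_iff_left hfactor,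
    ← key, mul_eq_zero_iff_left hz]

theorem stmt_17_general (k : ℕ) (P : Fin k → ℂ) (z x y q r : ℂ) (hz : z ≠ 0)
    (hpq : (z * r + ∏ α, (-P α)) ^ 2 - z * q ^ 2 = ∏ α, (P α ^ 2 - z)) :
    (((z * r + (-Complex.I) ^ k * z * y) / 2 + ∏ α, (-P α)) *
          ((r - (-Complex.I) ^ k * y) / 2) =
        ((q + (-Complex.I) ^ k * x) / 2) * ((q - (-Complex.I) ^ k * x) / 2)) ↔
      x ^ 2 - z * y ^ 2 =
        1 / (-z) * ((∏ α, (z - P α ^ 2)) - ∏ α, (-P α ^ 2)) +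
          2 * (∏ α, (-Complex.I * P α)) * y := by
  have hε2 : ((-Complex.I) ^ k) ^ 2 = (-1) ^ k := by
    rw [← pow_mul, mul_comm, pow_mul, neg_sq, Complex.I_sq]
  have hε4 : ((-Complex.I) ^ k) ^ 4 = 1 := by
    rw [show 4 = 2 * 2 from rfl, pow_mul, hε2, ← pow_mul, mul_comm, pow_mul, neg_one_sq, one_pow]
  have hC : ∏ α, (-P α) = ((-Complex.I) ^ k) ^ 2 * ∏ α, P α := by
    rw [Finset.prod_neg, Finset.card_univ, Fintype.card_fin, hε2]
  have hzP : ∏ α, (z - P α ^ 2) = ((-Complex.I) ^ k) ^ 2 * ∏ α, (P α ^ 2 - z) := by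
    conv_lhs => enter [2, α]; rw [← neg_sub]
    rw [Finset.prod_neg, Finset.card_univ, Fintype.card_fin, hε2]
  have hP2 : ∏ α, (-P α ^ 2) = ((-Complex.I) ^ k) ^ 2 * (∏ α, P α) ^ 2 := by
    rw [Finset.prod_neg, Finset.card_univ, Fintype.card_fin, hε2, Finset.prod_pow]
  have hIP : ∏ α, (-Complex.I * P α) = (-Complex.I) ^ k * ∏ α, P α := by
    rw [Finset.prod_mul_distrib, Finset.prod_const, Finset.card_univ, Fintype.card_fin]
  rw [hC] at hpq ⊢
  rw [hzP, hP2, hIP]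
  exact compatibility_iff_surface_eq hε4 hz hpq

theorem stmt_17 (k : ℕ) (hk : 1 ≤ k) (P : Fin k → ℂ) (z x y q r : ℂ) (hz : z ≠ 0)
    (hpq : (z * r + ∏ α, (-P α)) ^ 2 - z * q ^ 2 = ∏ α, (P α ^ 2 - z)) :
    (((z * r + (-Complex.I) ^ k * z * y) / 2 + ∏ α, (-P α)) *
          ((r - (-Complex.I) ^ k * y) / 2) =
        ((q + (-Complex.I) ^ k * x) / 2) * ((q - (-Complex.I) ^ k * x) / 2)) ↔
      x ^ 2 - z * y ^ 2 =
        1 / (-z) * ((∏ α, (z - P α ^ 2)) - ∏ α, (-P α ^ 2)) +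
          2 * (∏ α, (-Complex.I * P α)) * y :=
  stmt_17_general k P z x y q r hz hpq
end
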